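/- For two n-qubit Pauli error operators E₁, E₂ with GF(4)-images e₁, e₂, one has Tr(E₁E₂E₁E₂) = (−1)^{e₁∗e₂} · 2^n, where ∗ is the trace-symplectic inner product over GF(4). -/

import Mathlib

open Matrix

noncomputable def σx : Matrix (Fin 2) (Fin 2) ℂ := !![0, 1; 1, 0]
noncomputable def σz : Matrix (Fin 2) (Fin 2) ℂ := !![1, 0; 0, -1]
noncomputable def σy : Matrix (Fin 2) (Fin 2) ℂ := !![0, -Complex.I; Complex.I, 0]

noncomputable def tensorProd (n : ℕ) (τ : Fin n → Matrix (Fin 2) (Fin 2) ℂ) :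
    Matrix (Fin n → Fin 2) (Fin n → Fin 2) ℂ :=
  Matrix.of fun x y => ∏ i, τ i (x i) (y i)

/-- GF(4), the field with four elements. -/
abbrev GF4 := GaloisField 2 2

open scoped Classical in
/-- The inverse of the bijection `φ̄`: it sends `0 ↦ I₂`, `1 ↦ σx`, `ω ↦ σz`, `ω² ↦ σy`. -/
noncomputable def pauliOf (ω : GF4) (a : GF4) : Matrix (Fin 2) (Fin 2) ℂ :=
  if a = 0 then 1 else if a = 1 then σx else if a = ω then σz else σy

/-- The trace-symplectic pairing `u ∗ v = Σ_i (v_i u_i² + v_i² u_i) = Σ_i tr(v_i ū_i)`,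
taking values in GF(2) ⊆ GF(4). -/
noncomputable def sympPair {n : ℕ} (u v : Fin n → GF4) : GF4 :=
  ∑ i, (v i * (u i) ^ 2 + (v i) ^ 2 * u i)


/-
Everything factors over the qubits: the trace of a tensor product of `2 × 2` matrices is the
product of their traces, and for single-qubit Paulis `P_a P_b P_a P_b = ±1`, with sign `-1`
exactly when `a`, `b` are nonzero and distinct, i.e. when `b a² + b² a = a b (a + b) ≠ 0`.
Since `x⁴ = x` on GF(4), this term is fixed by squaring, so it lies in GF(2) = {0, 1}, and
the signs of such terms multiply to the sign of their sum.
-/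

lemma tensorProd_mul (n : ℕ) (τ σ : Fin n → Matrix (Fin 2) (Fin 2) ℂ) :
    tensorProd n τ * tensorProd n σ = tensorProd n (fun i => τ i * σ i) := by
  ext x y
  simp only [tensorProd, mul_apply, of_apply, Finset.prod_univ_sum, Fintype.piFinset_univ,
    Finset.prod_mul_distrib]

lemma trace_tensorProd (n : ℕ) (τ : Fin n → Matrix (Fin 2) (Fin 2) ℂ) :
    (tensorProd n τ).trace = ∏ i, (τ i).trace := by
  simp only [trace, diag, tensorProd, of_apply, Finset.prod_univ_sum, Fintype.piFinset_univ]

section SqEqAddOne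

variable {R : Type*} [CommRing R] [Nontrivial R] {ω : R}

lemma ne_zero_of_sq_eq_add_one (hω : ω ^ 2 = ω + 1) : ω ≠ 0 := by
  rintro rfl
  simp at hω

lemma ne_one_of_sq_eq_add_one (hω : ω ^ 2 = ω + 1) : ω ≠ 1 := by
  rintro rfl
  exact one_ne_zero (by linear_combination -hω)

end SqEqAddOne

section CharTwo

variable {R : Type*} [CommRing R] [CharP R 2]

lemma CharTwo.isIdempotentElem_add {a b : R} (ha : IsIdempotentElem a)
    (hb : IsIdempotentElem b) : IsIdempotentElem (a + b) := by
  unfold IsIdempotentElem at *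
  linear_combination ha + hb + a * b * CharTwo.two_eq_zero (R := R)

lemma add_one_ne_zero_of_sq_eq_add_one [Nontrivial R] {ω : R} (hω : ω ^ 2 = ω + 1) :
    ω + 1 ≠ 0 := by
  rw [Ne, CharTwo.add_eq_zero]
  exact ne_one_of_sq_eq_add_one hω

variable [IsDomain R]

lemma mul_sq_add_sq_mul_eq_zero_iff {a b : R} :
    b * a ^ 2 + b ^ 2 * a = 0 ↔ a = 0 ∨ b = 0 ∨ a = b := by
  rw [show b * a ^ 2 + b ^ 2 * a = a * b * (a + b) by ring, mul_eq_zero, mul_eq_zero,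
    CharTwo.add_eq_zero, or_assoc]

lemma prod_ite_eq_zero_eq_ite_sum_eq_zero [DecidableEq R] {ι : Type*} (s : Finset ι)
    (f : ι → R) (hf : ∀ i ∈ s, IsIdempotentElem (f i)) :
    ∏ i ∈ s, (if f i = 0 then (1 : ℂ) else -1) = if ∑ i ∈ s, f i = 0 then 1 else -1 := by
  classical
  induction s using Finset.induction_on with
  | empty => simp
  | insert a s ha ih =>
    rw [Finset.forall_mem_insert] at hf
    have hs : IsIdempotentElem (∑ i ∈ s, f i) :=
      Finset.sum_induction f _ (fun _ _ => CharTwo.isIdempotentElem_add) .zero hf.2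
    rw [Finset.prod_insert ha, Finset.sum_insert ha, ih hf.2]
    rcases IsIdempotentElem.iff_eq_zero_or_one.mp hf.1 with h | h <;>
      rcases IsIdempotentElem.iff_eq_zero_or_one.mp hs with h' | h' <;>
      simp [h, h', CharTwo.add_self_eq_zero]

end CharTwo

namespace GF4

lemma pow_four (a : GF4) : a ^ 4 = a := by
  have : Fintype GF4 := Fintype.ofFinite _
  have hcard : Fintype.card GF4 = 4 := by
    rw [← Nat.card_eq_fintype_card, GaloisField.card 2 2 two_ne_zero]; rfl
  rw [← hcard, FiniteField.pow_card]

lemma isIdempotentElem_mul_sq_add_sq_mul (a b : GF4) :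
    IsIdempotentElem (b * a ^ 2 + b ^ 2 * a) := by
  unfold IsIdempotentElem
  linear_combination b ^ 2 * pow_four a + a ^ 2 * pow_four b +
    a ^ 3 * b ^ 3 * CharTwo.two_eq_zero (R := GF4)

variable {ω : GF4} (hω : ω ^ 2 = ω + 1)
include hω

lemma eq_zero_or_eq_one_or_eq_or_eq_add_one (a : GF4) :
    a = 0 ∨ a = 1 ∨ a = ω ∨ a = ω + 1 := by
  have hroots : a * (a + 1) * ((a + ω) * (a + (ω + 1))) = 0 := by
    linear_combination pow_four a + (a ^ 2 + a) * hω +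
      ((ω + 1) * a ^ 3 + (2 * ω + 1) * a ^ 2 + (ω + 1) * a) * CharTwo.two_eq_zero (R := GF4)
  simp only [mul_eq_zero, CharTwo.add_eq_zero] at hroots
  tauto

end GF4

open scoped Classical in
lemma pauliOf_mul_pauliOf_mul_pauliOf_mul_pauliOf {ω : GF4} (hω : ω ^ 2 = ω + 1) (a b : GF4) :
    pauliOf ω a * pauliOf ω b * pauliOf ω a * pauliOf ω b =
      (if a = 0 ∨ b = 0 ∨ a = b then (1 : ℂ) else -1) • 1 := by
  have h0 := ne_zero_of_sq_eq_add_one hω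
  have h1 := ne_one_of_sq_eq_add_one hω
  have h2 := add_one_ne_zero_of_sq_eq_add_one hω
  rcases GF4.eq_zero_or_eq_one_or_eq_or_eq_add_one hω a with rfl | rfl | rfl | rfl <;>
    rcases GF4.eq_zero_or_eq_one_or_eq_or_eq_add_one hω b with rfl | rfl | rfl | rfl <;>
    simp [pauliOf, h0, h1, h2, h0.symm, h1.symm, h2.symm, σx, σy, σz, ← Matrix.ext_iff,
      Fin.forall_fin_two]

open scoped Classical in
theorem pauli_trace_E1E2E1E2 (ω : GF4) (hω : ω ^ 2 = ω + 1)
    (n : ℕ) (e₁ e₂ : Fin n → GF4) :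
    (tensorProd n (fun i => pauliOf ω (e₁ i)) * tensorProd n (fun i => pauliOf ω (e₂ i)) *
     tensorProd n (fun i => pauliOf ω (e₁ i)) * tensorProd n (fun i => pauliOf ω (e₂ i))).trace =
      (if sympPair e₁ e₂ = 0 then (1 : ℂ) else -1) * 2 ^ n := by
  have hqubit (a b : GF4) :
      (pauliOf ω a * pauliOf ω b * pauliOf ω a * pauliOf ω b).trace =
        (if b * a ^ 2 + b ^ 2 * a = 0 then (1 : ℂ) else -1) * 2 := by
    rw [pauliOf_mul_pauliOf_mul_pauliOf_mul_pauliOf hω, trace_smul, trace_one, smul_eq_mul,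
      mul_sq_add_sq_mul_eq_zero_iff]
    norm_num
  simp only [tensorProd_mul, trace_tensorProd, hqubit, Finset.prod_mul_distrib,
    Finset.prod_const, Finset.card_univ, Fintype.card_fin]
  rw [prod_ite_eq_zero_eq_ite_sum_eq_zero _ _
    fun i _ => GF4.isIdempotentElem_mul_sq_add_sq_mul _ _]
  rfl
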